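/- Let α be a normalized 3-cocycle on a group G with values in ℝ/ℤ (for the trivial action), let x ∈ G, and define the transgression τ_xα(g,h) := α(g,h,x) + α(x,g,h) − α(g,x,h). Then the restriction of τ_xα to the centralizer C_G(x) is a normalized 2-cocycle: for all g,h,k ∈ C_G(x) one has τ_xα(h,k) − τ_xα(gh,k) + τ_xα(g,hk) − τ_xα(g,h) = 0, and τ_xα(g,e) = τ_xα(e,g) = 0 for all g ∈ C_G(x). -/
import Mathlib


/-- The transgression of a 3-cocycle `α` at `x ∈ G`:
`τ_xα(g,h) := α(g,h,x) + α(x,g,h) − α(g,x,h)`. -/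
def transgression {G : Type*} [Group G] {A : Type*} [AddCommGroup A]
    (α : G → G → G → A) (x g h : G) : A :=
  α g h x + α x g h - α g x h

/-- if `α` is a normalized 3-cocycle on `G` with values in `ℝ/ℤ` and `x ∈ G`,
then the restriction of the transgression `τ_xα` to the centralizer `C_G(x)` is a
normalized 2-cocycle. -/
theorem transgression_is_normalized_two_cocycle {G : Type*} [Group G]
    (α : G → G → G → AddCircle (1 : ℝ))
    (hcoc : ∀ g₀ g₁ g₂ g₃ : G,
      α g₁ g₂ g₃ - α (g₀ * g₁) g₂ g₃ + α g₀ (g₁ * g₂) g₃ - α g₀ g₁ (g₂ * g₃) + α g₀ g₁ g₂ = 0)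
    (hnorm : ∀ g h : G, α 1 g h = 0 ∧ α g 1 h = 0 ∧ α g h 1 = 0)
    (x : G) :
    (∀ g h k : G, g ∈ Subgroup.centralizer ({x} : Set G) →
      h ∈ Subgroup.centralizer ({x} : Set G) → k ∈ Subgroup.centralizer ({x} : Set G) →
      transgression α x h k - transgression α x (g * h) k + transgression α x g (h * k)
        - transgression α x g h = 0) ∧
    (∀ g : G, g ∈ Subgroup.centralizer ({x} : Set G) →
      transgression α x g 1 = 0 ∧ transgression α x 1 g = 0) := by
  constructor
  · intro g h k hg hh hk
    have hxg : x * g = g * x := (Subgroup.mem_centralizer_singleton_iff.mp hg).symm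
    have hxh : x * h = h * x := (Subgroup.mem_centralizer_singleton_iff.mp hh).symm
    have hxk : x * k = k * x := (Subgroup.mem_centralizer_singleton_iff.mp hk).symm
    have h1 := hcoc g h k x
    have h2 := hcoc g h x k
    have h3 := hcoc g x h k
    have h4 := hcoc x g h k
    rw [hxk] at h2
    rw [hxh] at h3
    rw [hxg] at h4
    simp only [transgression]
    linear_combination (norm := abel) h1 - h2 + h3 - h4
  · intro g hg
    constructor
    · simp [transgression, (hnorm x g).2.2, (hnorm g x).2.2, (hnorm g x).2.1]
    · simp [transgression, (hnorm g x).1, (hnorm x g).1, (hnorm x g).2.1]
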